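/- For 0 < q < p ≤ 1, any n ≥ 1, and any x ∈ [0,1], the revised (p,q)-Bernstein operator applied to f(t) = t² satisfies B_{n,p,q}(t²; x) = (p^{n−1}/[n]_{p,q})·x + (q·[n−1]_{p,q}/[n]_{p,q})·x². -/

import Mathlib

open Finset

noncomputable def pqInt (p q : ℝ) (m : ℕ) : ℝ := (p ^ m - q ^ m) / (p - q)

noncomputable def pqFact (p q : ℝ) (m : ℕ) : ℝ := ∏ j ∈ Finset.Icc 1 m, pqInt p q j

noncomputable def pqChoose (p q : ℝ) (n k : ℕ) : ℝ :=
  pqFact p q n / (pqFact p q k * pqFact p q (n - k))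

/-- The sample node `[k]_{p,q}/(p^{k-n}[n]_{p,q}) = p^{n-k}[k]_{p,q}/[n]_{p,q}`. -/
noncomputable def pqNode (p q : ℝ) (n k : ℕ) : ℝ :=
  p ^ (n - k) * pqInt p q k / pqInt p q n

/-- Basis function `b_{n,k}(x)` of the revised (p,q)-Bernstein operator. -/
noncomputable def pqBasis (p q : ℝ) (n k : ℕ) (x : ℝ) : ℝ :=
  (p ^ (n * (n - 1) / 2))⁻¹ * pqChoose p q n k * p ^ (k * (k - 1) / 2) * x ^ k *
    ∏ s ∈ Finset.range (n - k), (p ^ s - q ^ s * x)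

/-- The revised (p,q)-Bernstein operator. -/
noncomputable def pqBern (p q : ℝ) (n : ℕ) (f : ℝ → ℝ) (x : ℝ) : ℝ :=
  ∑ k ∈ Finset.range (n + 1), pqBasis p q n k x * f (pqNode p q n k)


/-!
Absorption `[n+1 choose k+1]·[k+1] = [n+1]·[n choose k]` gives
`b_{n+1,k+1}(x) · node_{n+1,k+1} = x · b_{n,k}(x)`, so for a test function `t · g t` the operator
of degree `n+1` collapses to `x · ∑ₖ b_{n,k}(x) g(node_{n+1,k+1})`. Since
`node_{n+1,k+1} = (p^n + q [n] node_{n,k}) / [n+1]`, the second moment reduces to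
`B_n(1) = 1` and `B_n(t) = x`; the first of these is the `(p,q)`-binomial identity, proved by
induction from the `(p,q)`-Pascal rule.
-/

theorem pqInt_zero (p q : ℝ) : pqInt p q 0 = 0 := by
  simp [pqInt]

theorem pqInt_one {p q : ℝ} (hpq : q ≠ p) : pqInt p q 1 = 1 := by
  simp [pqInt, sub_ne_zero.mpr hpq.symm]

theorem pqInt_add {p q : ℝ} (hpq : q ≠ p) (a b : ℕ) :
    pqInt p q (a + b) = p ^ a * pqInt p q b + q ^ b * pqInt p q a := by
  have : p - q ≠ 0 := sub_ne_zero.mpr hpq.symm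
  simp only [pqInt]
  field_simp
  ring

theorem pqInt_succ {p q : ℝ} (hpq : q ≠ p) (k : ℕ) :
    pqInt p q (k + 1) = p ^ k + q * pqInt p q k := by
  rw [pqInt_add hpq, pqInt_one hpq, mul_one, pow_one]

theorem pqInt_pos {p q : ℝ} (hq : 0 ≤ q) (hqp : q < p) {m : ℕ} (hm : m ≠ 0) :
    0 < pqInt p q m :=
  div_pos (sub_pos.mpr (pow_lt_pow_left₀ hqp hq hm)) (sub_pos.mpr hqp)

theorem pqFact_pos {p q : ℝ} (hq : 0 ≤ q) (hqp : q < p) (m : ℕ) : 0 < pqFact p q m :=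
  prod_pos fun _ hj => pqInt_pos hq hqp (by simp at hj; omega)

theorem pqFact_zero (p q : ℝ) : pqFact p q 0 = 1 := by
  simp [pqFact]

theorem pqFact_succ (p q : ℝ) (m : ℕ) : pqFact p q (m + 1) = pqFact p q m * pqInt p q (m + 1) :=
  prod_Icc_succ_top (by omega) _

theorem pqChoose_zero_right {p q : ℝ} (hq : 0 ≤ q) (hqp : q < p) (n : ℕ) :
    pqChoose p q n 0 = 1 := by
  rw [pqChoose, pqFact_zero, one_mul, Nat.sub_zero, div_self (pqFact_pos hq hqp n).ne']

theorem pqChoose_self {p q : ℝ} (hq : 0 ≤ q) (hqp : q < p) (n : ℕ) :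
    pqChoose p q n n = 1 := by
  rw [pqChoose, Nat.sub_self, pqFact_zero, mul_one, div_self (pqFact_pos hq hqp n).ne']

theorem pqChoose_succ_succ_mul_pqInt {p q : ℝ} (hq : 0 ≤ q) (hqp : q < p) (n k : ℕ) :
    pqChoose p q (n + 1) (k + 1) * pqInt p q (k + 1) = pqInt p q (n + 1) * pqChoose p q n k := by
  have := (pqFact_pos hq hqp k).ne'
  have := (pqFact_pos hq hqp (n - k)).ne'
  have := (pqInt_pos hq hqp k.succ_ne_zero).ne'
  rw [pqChoose, pqChoose, Nat.add_sub_add_right, pqFact_succ, pqFact_succ]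
  field_simp

theorem pqChoose_succ_succ {p q : ℝ} (hq : 0 ≤ q) (hqp : q < p) {n k : ℕ} (hk : k < n) :
    pqChoose p q (n + 1) (k + 1) =
      p ^ (k + 1) * pqChoose p q n (k + 1) + q ^ (n - k) * pqChoose p q n k := by
  obtain ⟨d, rfl⟩ : ∃ d, n = k + 1 + d := ⟨n - (k + 1), by omega⟩
  have := (pqFact_pos hq hqp k).ne'
  have := (pqFact_pos hq hqp d).ne'
  have := (pqInt_pos hq hqp k.succ_ne_zero).ne'
  have := (pqInt_pos hq hqp d.succ_ne_zero).ne'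
  have hsplit := pqInt_add hqp.ne (k + 1) (d + 1)
  rw [← add_assoc] at hsplit
  rw [pqChoose, pqChoose, pqChoose, show k + 1 + d + 1 - (k + 1) = d + 1 by omega,
    show k + 1 + d - (k + 1) = d by omega, show k + 1 + d - k = d + 1 by omega,
    pqFact_succ _ _ (k + 1 + d), pqFact_succ _ _ k, pqFact_succ _ _ d, hsplit]
  field_simp

noncomputable def pqBinomTerm (p q : ℝ) (n k : ℕ) (x : ℝ) : ℝ :=
  pqChoose p q n k * p ^ (k * (k - 1) / 2) * x ^ k * ∏ s ∈ range (n - k), (p ^ s - q ^ s * x)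

theorem pqBasis_eq (p q : ℝ) (n k : ℕ) (x : ℝ) :
    pqBasis p q n k x = (p ^ (n * (n - 1) / 2))⁻¹ * pqBinomTerm p q n k x := by
  simp only [pqBasis, pqBinomTerm, mul_assoc]

theorem pqBinomTerm_succ_zero {p q : ℝ} (hq : 0 ≤ q) (hqp : q < p) (n : ℕ) (x : ℝ) :
    pqBinomTerm p q (n + 1) 0 x = pqBinomTerm p q n 0 x * (p ^ n - q ^ n * x) := by
  simp only [pqBinomTerm, pqChoose_zero_right hq hqp, Nat.sub_zero, prod_range_succ, mul_assoc]

theorem pqBinomTerm_succ_self {p q : ℝ} (hq : 0 ≤ q) (hqp : q < p) (n : ℕ) (x : ℝ) :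
    pqBinomTerm p q (n + 1) (n + 1) x = pqBinomTerm p q n n x * (p ^ n * x) := by
  simp only [pqBinomTerm, pqChoose_self hq hqp, Nat.sub_self, Nat.triangle_succ, pow_add,
    pow_succ]
  ring

theorem pqBinomTerm_succ_succ {p q : ℝ} (hq : 0 ≤ q) (hqp : q < p) {n k : ℕ} (hk : k < n)
    (x : ℝ) :
    pqBinomTerm p q (n + 1) (k + 1) x =
      pqBinomTerm p q n (k + 1) x * (p ^ n - p ^ (k + 1) * q ^ (n - (k + 1)) * x) +
        pqBinomTerm p q n k x * (p ^ k * q ^ (n - k) * x) := by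
  have hpow : p ^ n = p ^ (k + 1) * p ^ (n - (k + 1)) := by rw [← pow_add]; congr; omega
  simp only [pqBinomTerm, pqChoose_succ_succ hq hqp hk, Nat.add_sub_add_right,
    show n - k = n - (k + 1) + 1 by omega, prod_range_succ, Nat.triangle_succ, pow_add, pow_succ,
    hpow]
  ring

theorem sum_pqBinomTerm {p q : ℝ} (hq : 0 ≤ q) (hqp : q < p) (n : ℕ) (x : ℝ) :
    ∑ k ∈ range (n + 1), pqBinomTerm p q n k x = p ^ (n * (n - 1) / 2) := by
  induction n with
  | zero => simp [pqBinomTerm, pqChoose, pqFact_zero]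
  | succ n ih =>
    set T := fun k => pqBinomTerm p q n k x
    -- Pascal's rule splits each term so that the `u`-parts telescope.
    set u := fun k => T k * (p ^ k * q ^ (n - k) * x)
    have hmid : ∀ k ∈ range n,
        pqBinomTerm p q (n + 1) (k + 1) x = p ^ n * T (k + 1) - (u (k + 1) - u k) := by
      intro k hk
      rw [pqBinomTerm_succ_succ hq hqp (mem_range.mp hk)]
      ring
    have htel := sum_range_sub u n
    rw [sum_range_succ'] at ih
    rw [sum_range_succ', sum_range_succ, sum_congr rfl hmid, sum_sub_distrib, ← mul_sum, htel,
      pqBinomTerm_succ_zero hq hqp, pqBinomTerm_succ_self hq hqp, Nat.triangle_succ, pow_add,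
      ← ih]
    simp only [u, T, Nat.sub_self, Nat.sub_zero, pow_zero]
    ring

theorem pqBinomTerm_succ_succ_mul_pqInt {p q : ℝ} (hq : 0 ≤ q) (hqp : q < p) (n k : ℕ)
    (x : ℝ) :
    pqBinomTerm p q (n + 1) (k + 1) x * pqInt p q (k + 1) =
      pqInt p q (n + 1) * (p ^ k * x * pqBinomTerm p q n k x) := by
  have habs := pqChoose_succ_succ_mul_pqInt hq hqp n k
  simp only [pqBinomTerm, Nat.add_sub_add_right, Nat.triangle_succ, pow_add, pow_succ]
  linear_combination (p ^ (k * (k - 1) / 2) * p ^ k * x ^ k * x *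
    ∏ s ∈ range (n - k), (p ^ s - q ^ s * x)) * habs

theorem pqInt_mul_pqNode {p q : ℝ} (hq : 0 ≤ q) (hqp : q < p) {n k : ℕ} (hk : k ≤ n) :
    pqInt p q n * pqNode p q n k = p ^ (n - k) * pqInt p q k := by
  rcases Nat.eq_zero_or_pos n with rfl | hn
  · simp [Nat.le_zero.mp hk, pqInt_zero]
  · exact mul_div_cancel₀ _ (pqInt_pos hq hqp hn.ne').ne'

theorem pqNode_succ_succ {p q : ℝ} (hq : 0 ≤ q) (hqp : q < p) {n k : ℕ} (hk : k ≤ n) :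
    pqNode p q (n + 1) (k + 1) =
      (p ^ n + q * (pqInt p q n * pqNode p q n k)) / pqInt p q (n + 1) := by
  have hpow : p ^ n = p ^ (n - k) * p ^ k := by rw [← pow_add, Nat.sub_add_cancel hk]
  rw [pqNode, pqInt_mul_pqNode hq hqp hk, Nat.add_sub_add_right, pqInt_succ hqp.ne, hpow]
  ring

theorem pqBasis_succ_succ_mul_pqNode {p q : ℝ} (hq : 0 ≤ q) (hqp : q < p) {n k : ℕ} (hk : k ≤ n)
    (x : ℝ) :
    pqBasis p q (n + 1) (k + 1) x * pqNode p q (n + 1) (k + 1) = x * pqBasis p q n k x := by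
  have hp : p ≠ 0 := (hq.trans_lt hqp).ne'
  have hn : pqInt p q (n + 1) ≠ 0 := (pqInt_pos hq hqp n.succ_ne_zero).ne'
  have hpow : p ^ n = p ^ (n - k) * p ^ k := by rw [← pow_add, Nat.sub_add_cancel hk]
  have hterm := pqBinomTerm_succ_succ_mul_pqInt hq hqp n k x
  rw [pqBasis_eq, pqBasis_eq, pqNode, Nat.triangle_succ, Nat.add_sub_add_right, pow_add, hpow]
  field_simp
  linear_combination hterm

theorem pqBern_one {p q : ℝ} (hq : 0 ≤ q) (hqp : q < p) (n : ℕ) (x : ℝ) :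
    pqBern p q n (fun _ => 1) x = 1 := by
  simp only [pqBern, pqBasis_eq, mul_one, ← mul_sum, sum_pqBinomTerm hq hqp]
  exact inv_mul_cancel₀ (pow_ne_zero _ (hq.trans_lt hqp).ne')

theorem pqBern_succ_mul_id {p q : ℝ} (hq : 0 ≤ q) (hqp : q < p) (n : ℕ) (g : ℝ → ℝ) (x : ℝ) :
    pqBern p q (n + 1) (fun t => t * g t) x =
      x * ∑ k ∈ range (n + 1), pqBasis p q n k x * g (pqNode p q (n + 1) (k + 1)) := by
  rw [pqBern, sum_range_succ', pqNode, pqInt_zero, mul_zero, zero_div, zero_mul, mul_zero,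
    add_zero, mul_sum]
  refine sum_congr rfl fun k hk => ?_
  rw [← mul_assoc, pqBasis_succ_succ_mul_pqNode hq hqp (Nat.lt_succ_iff.mp (mem_range.mp hk)),
    mul_assoc]

theorem pqBern_id {p q : ℝ} (hq : 0 ≤ q) (hqp : q < p) (n : ℕ) (x : ℝ) :
    pqBern p q (n + 1) (fun t => t) x = x :=
  calc pqBern p q (n + 1) (fun t => t) x = pqBern p q (n + 1) (fun t => t * 1) x := by
        simp_rw [mul_one]
    _ = x * pqBern p q n (fun _ => 1) x := pqBern_succ_mul_id hq hqp n _ x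
    _ = x := by rw [pqBern_one hq hqp, mul_one]

theorem pqBern_sq_general (p q : ℝ) (n : ℕ) (hn : 1 ≤ n)
    (hq : 0 < q) (hqp : q < p) (x : ℝ) :
    pqBern p q n (fun t => t ^ 2) x =
      (p ^ (n - 1) / pqInt p q n) * x + (q * pqInt p q (n - 1) / pqInt p q n) * x ^ 2 := by
  obtain ⟨m, rfl⟩ : ∃ m, n = m + 1 := ⟨n - 1, by omega⟩
  have hfirst : pqInt p q m * pqBern p q m (fun t => t) x = pqInt p q m * x := by
    rcases m with _ | m
    · simp [pqInt_zero]
    · rw [pqBern_id hq.le hqp]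
  have hsum : ∑ k ∈ range (m + 1), pqBasis p q m k x * pqNode p q (m + 1) (k + 1) =
      (p ^ m * pqBern p q m (fun _ => 1) x + q * (pqInt p q m * pqBern p q m (fun t => t) x)) /
        pqInt p q (m + 1) := by
    rw [pqBern, pqBern, mul_sum, mul_sum, mul_sum, ← sum_add_distrib, sum_div]
    refine sum_congr rfl fun k hk => ?_
    rw [pqNode_succ_succ hq.le hqp (Nat.lt_succ_iff.mp (mem_range.mp hk))]
    ring
  calc pqBern p q (m + 1) (fun t => t ^ 2) x = pqBern p q (m + 1) (fun t => t * t) x := by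
        simp_rw [sq]
    _ = x * ∑ k ∈ range (m + 1), pqBasis p q m k x * pqNode p q (m + 1) (k + 1) :=
        pqBern_succ_mul_id hq.le hqp m _ x
    _ = _ := by
        rw [hsum, hfirst, pqBern_one hq.le hqp, Nat.add_sub_cancel]
        ring

theorem pqBern_sq (p q : ℝ) (n : ℕ) (hn : 1 ≤ n)
    (hq : 0 < q) (hqp : q < p) (hp : p ≤ 1) (x : ℝ) (hx : x ∈ Set.Icc (0:ℝ) 1) :
    pqBern p q n (fun t => t ^ 2) x =
      (p ^ (n - 1) / pqInt p q n) * x + (q * pqInt p q (n - 1) / pqInt p q n) * x ^ 2 :=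
  pqBern_sq_general p q n hn hq hqp x
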